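/- arXiv:1202.3433 — 6 statements merged into one kernel-verified Lean document; each statement's English description precedes it below -/
import Mathlib

section
/- Let n ≥ 1 and let P be an n × n matrix over 𝔽₂ with P Pᵀ = I. Let G be the bipartite graph on vertex set V = L ⊔ R (two disjoint copies of Fin n) in which l_a ∈ L is adjacent to r_b ∈ R if and only if P a b = 1, and there are no other edges. Then for every subset D ⊆ R, the iterated odd neighbourhood satisfies Odd(Odd(D)) = D. -/
open Matrix

/-- The bipartite graph on `Fin n ⊕ Fin n` (left copy `L = Sum.inl`, right copy
`R = Sum.inr`) in which `Sum.inl a` is adjacent to `Sum.inr b` iff `P a b = 1`,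
and there are no other edges. -/
def bipGraph (n : ℕ) (P : Matrix (Fin n) (Fin n) (ZMod 2)) :
    SimpleGraph (Fin n ⊕ Fin n) where
  Adj u v := (∃ a b, P a b = 1 ∧ u = Sum.inl a ∧ v = Sum.inr b) ∨
             (∃ a b, P a b = 1 ∧ u = Sum.inr b ∧ v = Sum.inl a)
  symm := by
    constructor
    rintro u v (⟨a, b, h, rfl, rfl⟩ | ⟨a, b, h, rfl, rfl⟩)
    · exact Or.inr ⟨a, b, h, rfl, rfl⟩
    · exact Or.inl ⟨a, b, h, rfl, rfl⟩
  loopless := by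
    constructor
    rintro u (⟨a, b, h, rfl, h2⟩ | ⟨a, b, h, rfl, h2⟩) <;> simp at h2

/-- The odd neighbourhood of a set `S`: the set of vertices `v` such that the number
of neighbours of `v` lying in `S` is odd. -/
def oddNbhd {V : Type*} (G : SimpleGraph V) (S : Set V) : Set V :=
  {v | Odd (G.neighborSet v ∩ S).ncard}

/-! Identify a set of vertices on one side with its indicator vector in `𝔽₂ⁿ`. The parity of
`|N(l_a) ∩ D|` is the `a`-th entry of `P 1_D`, so `Odd(D)` is the subset of `L` with indicator
`P 1_D`; symmetrically, the odd neighbourhood of a subset of `L` is read off `Pᵀ`. Hence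
`Odd(Odd(D))` has indicator `PᵀP 1_D = 1_D`, as `P Pᵀ = I` forces `PᵀP = I`. -/

theorem Set.natCast_ncard_eq_sum_indicator {ι R : Type*} [Fintype ι] [AddCommMonoidWithOne R]
    (t : Set ι) : (t.ncard : R) = ∑ i, t.indicator 1 i := by
  classical
  simp [Set.ncard_eq_toFinset_card', Set.indicator_apply, Finset.sum_boole]

theorem indicator_setOf_eq_one {ι : Type*} (w : ι → ZMod 2) :
    {i | w i = 1}.indicator 1 = w := by
  funext i
  simp only [Set.indicator_apply, Set.mem_ofPred_eq, Pi.one_apply]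
  generalize w i = x
  revert x
  decide

theorem natCast_ncard_inter_setOf_eq_one {ι : Type*} [Fintype ι] (v : ι → ZMod 2) (s : Set ι) :
    (({i | v i = 1} ∩ s).ncard : ZMod 2) = v ⬝ᵥ s.indicator 1 := by
  rw [Set.natCast_ncard_eq_sum_indicator, Set.inter_indicator_one, indicator_setOf_eq_one]
  rfl

theorem odd_ncard_image_setOf_inter_image_iff {α β : Type*} [Fintype α] {f : α → β}
    (hf : Function.Injective f) (v : α → ZMod 2) (E : Set α) :
    Odd (f '' {i | v i = 1} ∩ f '' E).ncard ↔ v ⬝ᵥ E.indicator 1 = 1 := by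
  rw [← Set.image_inter hf, Set.ncard_image_of_injective _ hf, ← ZMod.natCast_eq_one_iff_odd,
    natCast_ncard_inter_setOf_eq_one]

theorem not_odd_ncard_image_inl_inter_image_inr {α β : Type*} (s : Set α) (t : Set β) :
    ¬Odd (Sum.inl '' s ∩ Sum.inr '' t : Set (α ⊕ β)).ncard := by
  have hdisj : Disjoint (Sum.inl '' s) (Sum.inr '' t : Set (α ⊕ β)) :=
    Set.isCompl_range_inl_range_inr.disjoint.mono (Set.image_subset_range _ _)
      (Set.image_subset_range _ _)
  simp [hdisj.inter_eq]

namespace bipGraph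

variable {n : ℕ} (P : Matrix (Fin n) (Fin n) (ZMod 2))

theorem neighborSet_inl (a : Fin n) :
    (bipGraph n P).neighborSet (Sum.inl a) = Sum.inr '' {b | P a b = 1} := by
  ext v
  simp [bipGraph, eq_comm]

theorem neighborSet_inr (b : Fin n) :
    (bipGraph n P).neighborSet (Sum.inr b) = Sum.inl '' {a | Pᵀ b a = 1} := by
  ext v
  simp [bipGraph, eq_comm]

theorem oddNbhd_image_inr (E : Set (Fin n)) :
    oddNbhd (bipGraph n P) (Sum.inr '' E) = Sum.inl '' {a | (P *ᵥ E.indicator 1) a = 1} := by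
  ext (a | b)
  · simp only [oddNbhd, Set.mem_ofPred_eq, neighborSet_inl,
      odd_ncard_image_setOf_inter_image_iff Sum.inr_injective, Sum.inl_injective.mem_set_image]
    rfl
  · simp [oddNbhd, neighborSet_inr, not_odd_ncard_image_inl_inter_image_inr]

theorem oddNbhd_image_inl (A : Set (Fin n)) :
    oddNbhd (bipGraph n P) (Sum.inl '' A) = Sum.inr '' {b | (Pᵀ *ᵥ A.indicator 1) b = 1} := by
  ext (a | b)
  · simp [oddNbhd, neighborSet_inl, Set.inter_comm, not_odd_ncard_image_inl_inter_image_inr]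
  · simp only [oddNbhd, Set.mem_ofPred_eq, neighborSet_inr,
      odd_ncard_image_setOf_inter_image_iff Sum.inl_injective, Sum.inr_injective.mem_set_image]
    rfl

end bipGraph

theorem stmt0_general (n : ℕ) (P : Matrix (Fin n) (Fin n) (ZMod 2))
    (hP : P * Pᵀ = 1) (D : Set (Fin n ⊕ Fin n)) (hD : D ⊆ Set.range Sum.inr) :
    oddNbhd (bipGraph n P) (oddNbhd (bipGraph n P) D) = D := by
  obtain ⟨E, rfl⟩ := Set.subset_range_iff_exists_image_eq.mp hD
  have hPtP : Pᵀ * P = 1 := mul_eq_one_comm.mp hP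
  rw [bipGraph.oddNbhd_image_inr, bipGraph.oddNbhd_image_inl, indicator_setOf_eq_one,
    mulVec_mulVec, hPtP, one_mulVec]
  simp only [Set.indicator_eq_one_iff_mem, Set.ofPred_mem_eq]

/-- if `P Pᵀ = I` then for every subset `D` of the right bipartition `R`,
the iterated odd neighbourhood satisfies `Odd(Odd(D)) = D`. -/
theorem stmt0 (n : ℕ) (hn : 1 ≤ n) (P : Matrix (Fin n) (Fin n) (ZMod 2))
    (hP : P * Pᵀ = 1) (D : Set (Fin n ⊕ Fin n)) (hD : D ⊆ Set.range Sum.inr) :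
    oddNbhd (bipGraph n P) (oddNbhd (bipGraph n P) D) = D :=
  stmt0_general n P hP D hD
end

section
/- Let n ≥ 1, let P be an n × n matrix over 𝔽₂ with P Pᵀ = I, let G be the associated bipartite graph on V = L ⊔ R, and fix a vertex i ∈ L. Then for every subset A ⊆ V \ {i}, with complement B = (V \ {i}) \ A, at least one of A and B contains a set of the form D ∪ (Odd(D) \ {i}) with D ⊆ R and |D ∩ N_i| odd. (That is, for every bipartition of the players into A and B, at least one side contains a generating authorized set of Γ_{i,gen}; this is the completeness and perfectness of the access structure.) -/
open Matrix

/-!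
The vectors `(P d, d)` on `L ⊔ R` form a binary code `Γ` containing its dual, because
`P Pᵀ = I`, and a word `c ∈ Γ` with `c (l_i) = 1` yields the generating set `D = supp c ∩ R`, as
`Odd(D) = supp c ∩ L`. For a code `C ⊇ C^⊥` and a coordinate `j ∉ A`, either `e_j ∈ C + 𝔽^A`,
i.e. some word of `C` supported in `A ∪ {j}` has `c_j ≠ 0`, or a functional separating `e_j`
from `C + 𝔽^A` is a word of `C^⊥ ⊆ C` supported off `A` with nonzero `j`-coordinate.
-/

section DualContaining

variable {K ι : Type*} [Field K] [Fintype ι] [DecidableEq ι]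

theorem exists_support_diff_subset_or_compl (C : Submodule K (ι → K))
    (hC : ∀ y, (∀ c ∈ C, y ⬝ᵥ c = 0) → y ∈ C) {j : ι} {A : Set ι} (hj : j ∉ A) :
    (∃ c ∈ C, c j ≠ 0 ∧ Function.support c \ {j} ⊆ A) ∨
      (∃ c ∈ C, c j ≠ 0 ∧ Function.support c \ {j} ⊆ Aᶜ) := by
  let W := C ⊔ Submodule.pi Aᶜ (fun _ => ⊥)
  by_cases hW : Pi.single j 1 ∈ W
  · left
    obtain ⟨c, hc, z, hzA, hcz⟩ := Submodule.mem_sup.mp hW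
    have hz : ∀ k ∉ A, z k = 0 := fun k hk => (Submodule.mem_bot K).mp (hzA k hk)
    have hc_eq : c = Pi.single j 1 - z := eq_sub_of_add_eq hcz
    refine ⟨c, hc, by simp [hc_eq, hz j hj], fun k ⟨hck, hkj⟩ => ?_⟩
    by_contra hkA
    exact hck (by simp [hc_eq, Pi.single_eq_of_ne hkj, hz k hkA])
  · right
    obtain ⟨f, hfj, hfW⟩ := Submodule.exists_dual_map_eq_bot_of_notMem hW inferInstance
    have hf : ∀ w ∈ W, f w = 0 := fun w hw =>
      (Submodule.mem_bot K).mp (hfW ▸ Submodule.mem_map_of_mem hw)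
    let y : ι → K := fun k => f (Pi.single k 1)
    have hfy : ∀ w, f w = y ⬝ᵥ w := fun w => by
      conv_lhs => rw [pi_eq_sum_univ' w]
      simp [dotProduct, y, mul_comm]
    refine ⟨y, hC y fun c hc => ?_, hfj, fun k ⟨hyk, _⟩ hkA => hyk ?_⟩
    · rw [← hfy]; exact hf c (Submodule.mem_sup_left hc)
    · refine hf _ (Submodule.mem_sup_right fun l hl => ?_)
      simp [show l ≠ k from fun h => hl (h ▸ hkA)]

end DualContaining

theorem ZMod.odd_ncard_support_iff {ι : Type*} [Fintype ι] (x : ι → ZMod 2) :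
    Odd (Function.support x).ncard ↔ ∑ k, x k ≠ 0 := by
  have hx : ∀ t : ZMod 2, t = if t ≠ 0 then 1 else 0 := by decide
  rw [← ZMod.natCast_ne_zero_iff_odd, Finset.sum_congr rfl fun k _ => hx (x k),
    Finset.sum_boole, ← Set.ncard_coe_finset]
  congr!
  ext; simp

namespace bipGraph

variable {n : ℕ} (P : Matrix (Fin n) (Fin n) (ZMod 2))

@[simp] theorem adj_inl_inr (a b : Fin n) :
    (bipGraph n P).Adj (.inl a) (.inr b) ↔ P a b = 1 := by
  simp [bipGraph]

@[simp] theorem not_adj_inl_inl (a a' : Fin n) : ¬ (bipGraph n P).Adj (.inl a) (.inl a') := by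
  simp [bipGraph]

@[simp] theorem not_adj_inr_inr (b b' : Fin n) : ¬ (bipGraph n P).Adj (.inr b) (.inr b') := by
  simp [bipGraph]

-- The word of `D ⊆ R` is its indicator on `R` next to the indicator of `Odd(D)` on `L`.
def code : Submodule (ZMod 2) (Fin n ⊕ Fin n → ZMod 2) :=
  LinearMap.eqLocus (LinearMap.funLeft _ _ Sum.inl)
    (P.mulVecLin ∘ₗ LinearMap.funLeft _ _ Sum.inr)

theorem mem_code_iff (c : Fin n ⊕ Fin n → ZMod 2) :
    c ∈ code P ↔ c ∘ Sum.inl = P *ᵥ (c ∘ Sum.inr) := Iff.rfl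

theorem sumElim_mem_code (d : Fin n → ZMod 2) : Sum.elim (P *ᵥ d) d ∈ code P := by
  simp [mem_code_iff]

theorem mem_code_of_forall_dotProduct_eq_zero (hP : P * Pᵀ = 1) (y : Fin n ⊕ Fin n → ZMod 2)
    (hy : ∀ c ∈ code P, y ⬝ᵥ c = 0) : y ∈ code P := by
  set u := y ∘ Sum.inl
  set v := y ∘ Sum.inr
  have hv : v = Pᵀ *ᵥ u := by
    have : u ᵥ* P + v = 0 := dotProduct_eq_zero_iff.mp fun d => by
      have := hy _ (sumElim_mem_code P d)
      rwa [← Sum.elim_comp_inl_inr y, sumElim_dotProduct_sumElim, dotProduct_mulVec,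
        ← add_dotProduct] at this
    rw [mulVec_transpose, ← neg_eq_of_add_eq_zero_right this]
    ext b; exact ZMod.neg_eq_self_mod_two _
  change u = P *ᵥ v
  rw [hv, mulVec_mulVec, hP, one_mulVec]

theorem neighborSet_inl_inter_support_inr (a : Fin n) (d : Fin n ⊕ Fin n → ZMod 2) :
    (bipGraph n P).neighborSet (.inl a) ∩ (Function.support d ∩ Set.range Sum.inr) =
      Sum.inr '' Function.support fun b => P a b * d (.inr b) := by
  have h01 : ∀ t : ZMod 2, t ≠ 0 ↔ t = 1 := by decide
  ext (a' | b) <;> simp [h01]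

theorem neighborSet_inr_inter_range_inr (b : Fin n) :
    (bipGraph n P).neighborSet (.inr b) ∩ Set.range Sum.inr = ∅ := by
  ext (a | b') <;> simp

theorem oddNbhd_support_inter_range_inr {c : Fin n ⊕ Fin n → ZMod 2} (hc : c ∈ code P) :
    oddNbhd (bipGraph n P) (Function.support c ∩ Set.range Sum.inr) =
      Function.support c ∩ Set.range Sum.inl := by
  ext (a | b)
  · have hca : c (.inl a) = ∑ b, P a b * c (.inr b) := congrFun hc a
    simp only [oddNbhd, Set.mem_ofPred_eq, neighborSet_inl_inter_support_inr,
      Set.ncard_image_of_injective _ Sum.inr_injective, ZMod.odd_ncard_support_iff, ← hca]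
    simp
  · simp [oddNbhd, ← Set.inter_assoc, Set.inter_right_comm _ (Function.support c),
      neighborSet_inr_inter_range_inr]

theorem exists_generating_subset_of_mem_code {c : Fin n ⊕ Fin n → ZMod 2} (hc : c ∈ code P)
    {i : Fin n} (hci : c (.inl i) ≠ 0) {E : Set (Fin n ⊕ Fin n)}
    (hE : Function.support c \ {.inl i} ⊆ E) :
    ∃ D : Set (Fin n ⊕ Fin n), D ⊆ Set.range Sum.inr ∧
      Odd ((D ∩ (bipGraph n P).neighborSet (.inl i)).ncard) ∧
      D ∪ (oddNbhd (bipGraph n P) D \ {.inl i}) ⊆ E := by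
  refine ⟨Function.support c ∩ Set.range Sum.inr, Set.inter_subset_right, ?_, ?_⟩
  · have : Sum.inl i ∈ oddNbhd (bipGraph n P) (Function.support c ∩ Set.range Sum.inr) := by
      rw [oddNbhd_support_inter_range_inr P hc]
      exact ⟨hci, i, rfl⟩
    rwa [Set.inter_comm]
  · rw [oddNbhd_support_inter_range_inr P hc]
    rintro v (⟨hv, b, rfl⟩ | ⟨⟨hv, -⟩, hvi⟩)
    · exact hE ⟨hv, Sum.inr_ne_inl⟩
    · exact hE ⟨hv, hvi⟩

end bipGraph

theorem stmt3_general (n : ℕ) (P : Matrix (Fin n) (Fin n) (ZMod 2))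
    (hP : P * Pᵀ = 1) (i : Fin n) (A : Set (Fin n ⊕ Fin n))
    (hA : A ⊆ ({Sum.inl i}ᶜ : Set (Fin n ⊕ Fin n))) :
    (∃ D : Set (Fin n ⊕ Fin n), D ⊆ Set.range Sum.inr ∧
      Odd ((D ∩ (bipGraph n P).neighborSet (Sum.inl i)).ncard) ∧
      D ∪ (oddNbhd (bipGraph n P) D \ {Sum.inl i}) ⊆ A) ∨
    (∃ D : Set (Fin n ⊕ Fin n), D ⊆ Set.range Sum.inr ∧
      Odd ((D ∩ (bipGraph n P).neighborSet (Sum.inl i)).ncard) ∧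
      D ∪ (oddNbhd (bipGraph n P) D \ {Sum.inl i}) ⊆
        (({Sum.inl i}ᶜ : Set (Fin n ⊕ Fin n)) \ A)) := by
  have hiA : Sum.inl i ∉ A := fun h => hA h rfl
  rcases exists_support_diff_subset_or_compl (bipGraph.code P)
      (bipGraph.mem_code_of_forall_dotProduct_eq_zero P hP) hiA with
    ⟨c, hc, hci, hcA⟩ | ⟨c, hc, hci, hcB⟩
  · exact .inl (bipGraph.exists_generating_subset_of_mem_code P hc hci hcA)
  · exact .inr (bipGraph.exists_generating_subset_of_mem_code P hc hci
      fun v hv => ⟨hv.2, hcB hv⟩)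

/-- for the vertex `i ∈ L` and any subset `A ⊆ V \\ {i}` with complement
`B = (V \\ {i}) \\ A`, at least one of `A` and `B` contains a generating authorized set
`D ∪ (Odd(D) \\ {i})` with `D ⊆ R` and `|D ∩ N_i|` odd. -/
theorem stmt3 (n : ℕ) (hn : 1 ≤ n) (P : Matrix (Fin n) (Fin n) (ZMod 2))
    (hP : P * Pᵀ = 1) (i : Fin n) (A : Set (Fin n ⊕ Fin n))
    (hA : A ⊆ ({Sum.inl i}ᶜ : Set (Fin n ⊕ Fin n))) :
    (∃ D : Set (Fin n ⊕ Fin n), D ⊆ Set.range Sum.inr ∧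
      Odd ((D ∩ (bipGraph n P).neighborSet (Sum.inl i)).ncard) ∧
      D ∪ (oddNbhd (bipGraph n P) D \ {Sum.inl i}) ⊆ A) ∨
    (∃ D : Set (Fin n ⊕ Fin n), D ⊆ Set.range Sum.inr ∧
      Odd ((D ∩ (bipGraph n P).neighborSet (Sum.inl i)).ncard) ∧
      D ∪ (oddNbhd (bipGraph n P) D \ {Sum.inl i}) ⊆
        (({Sum.inl i}ᶜ : Set (Fin n ⊕ Fin n)) \ A)) :=
  stmt3_general n P hP i A hA
end

section
/- Let n ≥ 1 and let P be an n × n matrix over 𝔽₂ with P Pᵀ = I. Let g ∈ 𝔽₂ⁿ be the 0th row of P and let Q be the (n−1) × n matrix formed by the remaining rows of P. Working in 𝔽₂^{(n−1)+n} (vectors written as pairs (u, w) with u of length n−1 and w of length n), the 𝔽₂-linear span of the vector (0, g) together with the rows (e_k, Q_k) of the block matrix [I_{n−1} | Q] (where e_k is the kth standard basis vector of 𝔽₂^{n−1} and Q_k is the kth row of Q) is equal to the 𝔽₂-linear span of the rows (colⱼ(Q), eⱼ) of the block matrix [Qᵀ | I_n] (where colⱼ(Q) ∈ 𝔽₂^{n−1}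 is the jth column of Q and eⱼ is the jth standard basis vector of 𝔽₂ⁿ). -/
open Matrix

/-- with `n = m + 1 ≥ 1`, `P` an `n × n` matrix over `𝔽₂` with `P Pᵀ = I`,
`g = P 0` its `0`-th row and `Q` (with rows `Q k = P k.succ`) the matrix of remaining rows,
the span in `𝔽₂^{(n-1)} × 𝔽₂^n` of `(0, g)` together with the rows `(e_k, Q k)` of
`[I_{n-1} | Q]` equals the span of the rows `(col_j Q, e_j)` of `[Qᵀ | I_n]`. -/
theorem stmt4 (m : ℕ) (P : Matrix (Fin (m + 1)) (Fin (m + 1)) (ZMod 2))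
    (hP : P * Pᵀ = 1) :
    Submodule.span (ZMod 2)
      (({((0 : Fin m → ZMod 2), P 0)} : Set ((Fin m → ZMod 2) × (Fin (m + 1) → ZMod 2))) ∪
        Set.range (fun k : Fin m =>
          ((Pi.single k 1 : Fin m → ZMod 2), P k.succ))) =
    Submodule.span (ZMod 2)
      (Set.range (fun j : Fin (m + 1) =>
        ((fun r : Fin m => P r.succ j), (Pi.single j 1 : Fin (m + 1) → ZMod 2)))) := by
  have hP' : Pᵀ * P = 1 := mul_eq_one_comm.mp hP
  have hPe : ∀ i j, ∑ k, P i k * P j k = (1 : Matrix (Fin (m+1)) (Fin (m+1)) (ZMod 2)) i j := by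
    intro i j
    rw [← hP]; simp [Matrix.mul_apply, Matrix.transpose_apply]
  have hPe' : ∀ i j, ∑ k, P k i * P k j = (1 : Matrix (Fin (m+1)) (Fin (m+1)) (ZMod 2)) i j := by
    intro i j
    rw [← hP']; simp [Matrix.mul_apply, Matrix.transpose_apply]
  apply le_antisymm
  · rw [Submodule.span_le]
    rintro x hx
    rcases hx with hx | ⟨k, rfl⟩
    · rw [Set.mem_singleton_iff] at hx; subst hx
      rw [SetLike.mem_coe]
      have : ((0 : Fin m → ZMod 2), P 0) =
          ∑ j, P 0 j • ((fun r : Fin m => P r.succ j),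
            (Pi.single j 1 : Fin (m+1) → ZMod 2)) := by
        refine Prod.ext ?_ ?_
        · funext r
          simp only [Prod.fst_sum, Prod.smul_fst, Finset.sum_apply, Pi.smul_apply,
            smul_eq_mul, Pi.zero_apply]
          rw [hPe 0 r.succ, Matrix.one_apply_ne (Fin.succ_ne_zero r).symm]
        · funext l
          simp only [Prod.snd_sum, Prod.smul_snd, Finset.sum_apply, Pi.smul_apply,
            smul_eq_mul, Pi.single_apply]
          simp [mul_ite, eq_comm]
      rw [this]
      exact Submodule.sum_mem _ fun j _ =>
        Submodule.smul_mem _ _ (Submodule.subset_span ⟨j, rfl⟩)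
    · rw [SetLike.mem_coe]
      have : ((Pi.single k 1 : Fin m → ZMod 2), P k.succ) =
          ∑ j, P k.succ j • ((fun r : Fin m => P r.succ j),
            (Pi.single j 1 : Fin (m+1) → ZMod 2)) := by
        refine Prod.ext ?_ ?_
        · funext r
          simp only [Prod.fst_sum, Prod.smul_fst, Finset.sum_apply, Pi.smul_apply,
            smul_eq_mul]
          rw [hPe k.succ r.succ, Matrix.one_apply, Pi.single_apply]
          simp [Fin.succ_inj, eq_comm]
        · funext l
          simp only [Prod.snd_sum, Prod.smul_snd, Finset.sum_apply, Pi.smul_apply,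
            smul_eq_mul, Pi.single_apply]
          simp [mul_ite, eq_comm]
      show ((Pi.single k 1 : Fin m → ZMod 2), P k.succ) ∈ _
      rw [this]
      exact Submodule.sum_mem _ fun j _ =>
        Submodule.smul_mem _ _ (Submodule.subset_span ⟨j, rfl⟩)
  · rw [Submodule.span_le]
    rintro x ⟨j, rfl⟩
    rw [SetLike.mem_coe]
    have : ((fun r : Fin m => P r.succ j), (Pi.single j 1 : Fin (m+1) → ZMod 2)) =
        P 0 j • ((0 : Fin m → ZMod 2), P 0) +
          ∑ k, P k.succ j • ((Pi.single k 1 : Fin m → ZMod 2), P k.succ) := by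
      refine Prod.ext ?_ ?_
      · funext r
        simp only [Prod.fst_sum, Prod.smul_fst, Prod.fst_add, Finset.sum_apply,
          Pi.add_apply, Pi.smul_apply, smul_eq_mul, Pi.zero_apply, mul_zero,
          Pi.single_apply]
        simp [mul_ite, eq_comm]
      · funext l
        simp only [Prod.snd_sum, Prod.smul_snd, Prod.snd_add, Finset.sum_apply,
          Pi.add_apply, Pi.smul_apply, smul_eq_mul]
        have := hPe' j l
        rw [Fin.sum_univ_succ] at this
        rw [this, Matrix.one_apply, Pi.single_apply]
        simp [eq_comm]
    show ((fun r : Fin m => P r.succ j), (Pi.single j 1 : Fin (m+1) → ZMod 2)) ∈ _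
    rw [this]
    refine Submodule.add_mem _
      (Submodule.smul_mem _ _ (Submodule.subset_span (Or.inl rfl)))
      (Submodule.sum_mem _ fun k _ =>
        Submodule.smul_mem _ _ (Submodule.subset_span (Or.inr ⟨k, rfl⟩)))
end

section
/- Let G be a finite simple graph on vertex set W and let D ⊆ W be an independent set of G (no two vertices of D are adjacent). Then X_D Z_{Odd(D)} |G⟩ = |G⟩, i.e., the operator K_D = ∏_{j∈D} X_j ∏_{k∈Odd(D)} Z_k stabilizes the graph state |G⟩. -/
open Matrix

/-- The quadratic form of a graph: `q(x) = ∑_{{u,v} ∈ E(H)} x_u x_v` over `𝔽₂`. -/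
noncomputable def qForm {W : Type*} (H : SimpleGraph W) (x : W → ZMod 2) : ZMod 2 :=
  ∑ᶠ e ∈ H.edgeSet, Sym2.lift ⟨fun u v => x u * x v, fun _ _ => mul_comm _ _⟩ e

/-- The graph state of `H`: the vector in `ℂ^(W → ZMod 2)` with amplitude
`2^{-|W|/2} (-1)^{q(x)}` at the basis label `x`. -/
noncomputable def graphState {W : Type*} (H : SimpleGraph W) : (W → ZMod 2) → ℂ :=
  fun x => (Real.sqrt 2 : ℂ)⁻¹ ^ Nat.card W * (-1 : ℂ) ^ (qForm H x).val

/-- The Pauli operator `X_S = ∏_{w ∈ S} X_w`, acting by `(X_S ψ)(x) = ψ(x + 1_S)`. -/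
noncomputable def XOp {W : Type*} (S : Set W) (ψ : (W → ZMod 2) → ℂ) : (W → ZMod 2) → ℂ :=
  fun x => ψ (x + S.indicator 1)

/-- The Pauli operator `Z_S = ∏_{w ∈ S} Z_w`, acting by
`(Z_S ψ)(x) = (-1)^{∑_{w ∈ S} x_w} ψ(x)`. -/
noncomputable def ZOp {W : Type*} (S : Set W) (ψ : (W → ZMod 2) → ℂ) : (W → ZMod 2) → ℂ :=
  fun x => (-1 : ℂ) ^ (∑ᶠ w ∈ S, (x w).val) * ψ x

/-!
Write `1_D` for the indicator of `D`. Expanding the quadratic form of the graph,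
`q(x + 1_D) = q(x) + q(1_D) + ∑_v x_v |N_v ∩ D|`. Independence of `D` kills `q(1_D)`, and the
cross term is `∑_{v ∈ Odd(D)} x_v`. Since `Odd(D)` is disjoint from `D`, this is also the exponent
of the sign that `Z_{Odd(D)}` produces at `x + 1_D`, so the two signs cancel.
-/

open Finset

section NegOnePow

variable {R : Type*} [Ring R]

theorem neg_one_pow_zmod_two_val_add (a b : ZMod 2) :
    (-1 : R) ^ (a + b).val = (-1) ^ a.val * (-1) ^ b.val := by
  rw [ZMod.val_add, ← neg_one_pow_eq_pow_mod_two, pow_add]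

theorem neg_one_pow_natCast_zmod_two_val (n : ℕ) : (-1 : R) ^ (n : ZMod 2).val = (-1) ^ n := by
  rw [ZMod.val_natCast, ← neg_one_pow_eq_pow_mod_two]

theorem neg_one_pow_finsum_mem_val {ι : Type*} {s : Set ι} (hs : s.Finite) (x : ι → ZMod 2) :
    (-1 : R) ^ (∑ᶠ i ∈ s, (x i).val) = (-1) ^ (∑ᶠ i ∈ s, x i).val := by
  rw [← neg_one_pow_natCast_zmod_two_val, Nat.cast_finsum_mem hs]
  simp only [ZMod.natCast_zmod_val]

end NegOnePow

namespace SimpleGraph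

variable {V : Type*} [Fintype V] (G : SimpleGraph V) [DecidableRel G.Adj]
  {M : Type*} [AddCommMonoid M]

theorem sum_darts_eq_sum_neighborFinset (g : V → V → M) :
    ∑ d : G.Dart, g d.fst d.snd = ∑ v, ∑ u ∈ G.neighborFinset v, g v u := by
  let e : G.Dart ≃ Σ v : V, {u // G.Adj v u} :=
    { toFun := fun d => ⟨d.fst, d.snd, d.adj⟩
      invFun := fun p => ⟨(p.1, p.2.1), p.2.2⟩ }
  rw [← e.symm.sum_comp, ← univ_sigma_univ, sum_sigma]
  refine sum_congr rfl fun v _ => ?_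
  exact (sum_subtype (G.neighborFinset v) (fun u => G.mem_neighborFinset v u) (g v)).symm

theorem sum_edgeFinset_eq_sum_darts [DecidableEq V] (f : Sym2 V → M) (g : V → V → M)
    (hfg : ∀ u v, G.Adj u v → f s(u, v) = g u v + g v u) :
    ∑ e ∈ G.edgeFinset, f e = ∑ d : G.Dart, g d.fst d.snd := by
  rw [← sum_fiberwise_of_maps_to (fun (d : G.Dart) _ => mem_edgeFinset.mpr d.edge_mem)]
  refine sum_congr rfl fun e he => ?_
  induction e with
  | _ u v =>
    let d : G.Dart := ⟨(u, v), mem_edgeFinset.mp he⟩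
    rw [show ({d' : G.Dart | d'.edge = s(u, v)} : Finset _) = {d, d.symm} from d.edge_fiber,
      sum_pair (Ne.symm d.symm_ne), hfg u v d.adj]
    rfl

end SimpleGraph

section IndependentSet

variable {V : Type*} (G : SimpleGraph V)

theorem qForm_indicator_eq_zero_of_independent {D : Set V}
    (hD : ∀ u ∈ D, ∀ v ∈ D, ¬ G.Adj u v) : qForm G (D.indicator 1) = 0 := by
  refine finsum_mem_eq_zero_of_forall_eq_zero fun e he => ?_
  induction e with
  | _ u v =>
    by_cases hu : u ∈ D
    · have hv : v ∉ D := fun hv => hD u hu v hv he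
      simp [hv]
    · simp [hu]

theorem disjoint_oddNbhd_of_independent {D : Set V}
    (hD : ∀ u ∈ D, ∀ v ∈ D, ¬ G.Adj u v) : Disjoint D (oddNbhd G D) := by
  refine Set.disjoint_left.mpr fun v hv hodd => ?_
  have hempty : G.neighborSet v ∩ D = ∅ :=
    Set.eq_empty_of_forall_notMem fun u ⟨hadj, hu⟩ => hD v hv u hu hadj
  simp [oddNbhd, hempty] at hodd

end IndependentSet

section GraphState

variable {V : Type*} [Fintype V] (G : SimpleGraph V) [DecidableRel G.Adj]

theorem qForm_eq_sum_edgeFinset (x : V → ZMod 2) :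
    qForm G x =
      ∑ e ∈ G.edgeFinset, Sym2.lift ⟨fun u v => x u * x v, fun _ _ => mul_comm _ _⟩ e := by
  rw [qForm, ← G.coe_edgeFinset, finsum_mem_coe_finset]

theorem qForm_add [DecidableEq V] (x y : V → ZMod 2) :
    qForm G (x + y) = qForm G x + qForm G y + ∑ v, x v * ∑ u ∈ G.neighborFinset v, y u := by
  simp only [qForm_eq_sum_edgeFinset, mul_sum]
  rw [← G.sum_darts_eq_sum_neighborFinset (fun v u => x v * y u),
    ← G.sum_edgeFinset_eq_sum_darts
      (Sym2.lift ⟨fun u v => x u * y v + x v * y u, fun _ _ => add_comm _ _⟩) _ (fun _ _ _ => rfl),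
    ← sum_add_distrib, ← sum_add_distrib]
  refine sum_congr rfl fun e _ => ?_
  induction e with
  | _ u v => simp only [Sym2.lift_mk, Pi.add_apply]; ring

theorem sum_neighborFinset_indicator_one {R : Type*} [AddCommMonoidWithOne R] (D : Set V) (v : V) :
    ∑ u ∈ G.neighborFinset v, D.indicator (1 : V → R) u = (G.neighborSet v ∩ D).ncard := by
  classical
  rw [sum_indicator_eq_sum_filter]
  simp only [Pi.one_apply, sum_const, nsmul_one]
  rw [← Set.ncard_coe_finset]
  congr
  ext u
  simp

theorem sum_mul_sum_neighborFinset_indicator_one (D : Set V) (x : V → ZMod 2) :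
    ∑ v, x v * ∑ u ∈ G.neighborFinset v, D.indicator 1 u = ∑ᶠ v ∈ oddNbhd G D, x v := by
  classical
  rw [finsum_mem_def, finsum_eq_sum_of_fintype]
  refine sum_congr rfl fun v _ => ?_
  rw [sum_neighborFinset_indicator_one, Set.indicator_apply]
  by_cases hv : v ∈ oddNbhd G D
  · simp [hv, ZMod.natCast_eq_one_iff_odd.mpr hv]
  · simp [hv, ZMod.natCast_eq_zero_iff_even.mpr (Nat.not_odd_iff_even.mp hv)]

theorem qForm_add_indicator_of_independent {D : Set V}
    (hD : ∀ u ∈ D, ∀ v ∈ D, ¬ G.Adj u v) (x : V → ZMod 2) :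
    qForm G (x + D.indicator 1) = qForm G x + ∑ᶠ v ∈ oddNbhd G D, x v := by
  classical
  rw [qForm_add, qForm_indicator_eq_zero_of_independent G hD, add_zero,
    sum_mul_sum_neighborFinset_indicator_one]

end GraphState

/-- if `D` is an independent set of `G`, then the operator
`K_D = X_D Z_{Odd(D)}` stabilizes the graph state: `X_D Z_{Odd(D)} |G⟩ = |G⟩`. -/
theorem stmt7 {W : Type*} [Fintype W] (G : SimpleGraph W) (D : Set W)
    (hD : ∀ u ∈ D, ∀ v ∈ D, ¬ G.Adj u v) :
    XOp D (ZOp (oddNbhd G D) (graphState G)) = graphState G := by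
  classical
  funext x
  have hsign : ∑ᶠ w ∈ oddNbhd G D, ((x + D.indicator (1 : W → ZMod 2)) w).val =
      ∑ᶠ w ∈ oddNbhd G D, (x w).val :=
    finsum_mem_congr rfl fun w hw => by
      simp [Set.indicator_of_notMem ((disjoint_oddNbhd_of_independent G hD).notMem_of_mem_right hw)]
  simp only [XOp, ZOp, graphState, hsign, neg_one_pow_finsum_mem_val (Set.toFinite _),
    qForm_add_indicator_of_independent G hD, neg_one_pow_zmod_two_val_add]
  have hsq : ∀ n : ℕ, (-1 : ℂ) ^ n * (-1) ^ n = 1 := fun n => by rw [← mul_pow]; norm_num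
  linear_combination ((Real.sqrt 2 : ℂ)⁻¹ ^ Nat.card W * (-1 : ℂ) ^ (qForm G x).val) *
    hsq (∑ᶠ w ∈ oddNbhd G D, x w).val
end

section
/- Let n ≥ 1, let P be an n × n matrix over 𝔽₂ with P Pᵀ = I, let G be the associated bipartite graph on V = L ⊔ R, fix i ∈ L, and let D ⊆ R be a set with i ∈ Odd(D) (equivalently, |D ∩ N_i| is odd). Then the operator U_D' Z_{N_i} = Z_D X_{Odd(D)\{i}} Z_{N_i} stabilizes the graph state of the vertex-deleted graph: Z_D X_{Odd(D)\{i}} Z_{N_i} |G \ i⟩ = |G \ i⟩. (Here Odd(D) and N_i are computed in G, and G \ i is the graph obtained from G by deleting vertex i.) -/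
open Matrix

/-!
Extending a labelling of `G \ i` by `0` at `i` identifies the quadratic form of `G \ i` with that
of `G`, so everything can be computed on `G`. Let `A = [[0, P], [Pᵀ, 0]]` be the adjacency matrix
of `G` over `𝔽₂`; `P Pᵀ = I` gives `A² = I`. With `d = 1_D`, the indicator of
`S = Odd(D) \ {i}` is `s = A d - e_i`, hence `A s = d - A e_i`. Flipping the labels in `S`
changes `q(y)` by `y ⬝ A s + q(s) = y ⬝ d + y ⬝ A e_i` (`q(s) = 0` because `S ⊆ L`), and
this cancels the sign contributed by `Z_D Z_{N_i}`.
-/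

open Function

section Sign
variable {R : Type*} [Ring R]

lemma neg_one_pow_val_add (u v : ZMod 2) :
    (-1 : R) ^ (u + v).val = (-1) ^ u.val * (-1) ^ v.val := by
  rw [ZMod.val_add, ← neg_one_pow_eq_pow_mod_two, pow_add]

lemma neg_one_pow_finsum_mem_val_s9 {α : Type*} [Finite α] (S : Set α) (f : α → ZMod 2) :
    (-1 : R) ^ (∑ᶠ a ∈ S, (f a).val) = (-1) ^ (∑ᶠ a ∈ S, f a).val := by
  rw [neg_one_pow_eq_pow_mod_two, ← ZMod.val_natCast, Nat.cast_finsum_mem S.toFinite]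
  simp only [ZMod.natCast_zmod_val]

end Sign

lemma finsum_mem_eq_indicator_dotProduct {V R : Type*} [Fintype V] [NonAssocSemiring R]
    (T : Set V) (y : V → R) : ∑ᶠ v ∈ T, y v = T.indicator 1 ⬝ᵥ y := by
  classical
  rw [finsum_mem_def, finsum_eq_sum_of_fintype]
  refine Finset.sum_congr rfl fun v _ => ?_
  by_cases hv : v ∈ T <;> simp [hv]

section Extend
variable {V M : Type*} {s : Set V}

lemma extend_val_of_notMem [Zero M] (x : s → M) {v : V} (hv : v ∉ s) :
    extend Subtype.val x 0 v = 0 :=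
  extend_apply' _ _ _ fun ⟨w, hw⟩ => hv (hw ▸ w.2)

lemma extend_val_add [AddCommMonoid M] (x x' : s → M) :
    extend Subtype.val (x + x') 0 = extend Subtype.val x 0 + extend Subtype.val x' 0 := by
  funext v
  by_cases hv : v ∈ s
  · lift v to s using hv
    simp
  · simp [extend_val_of_notMem _ hv]

lemma extend_val_indicator_one [Zero M] [One M] {S : Set V} (hS : S ⊆ s) :
    extend Subtype.val ({w : s | ↑w ∈ S}.indicator 1) (0 : V → M) = S.indicator 1 := by
  funext v
  by_cases hv : v ∈ s
  · lift v to s using hv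
    by_cases hvS : (v : V) ∈ S <;> simp [hvS]
  · simp [extend_val_of_notMem _ hv, Set.indicator_of_notMem (fun h => hv (hS h))]

lemma finsum_mem_extend_val [AddCommMonoid M] [Finite V] (x : s → M) (T : Set V) :
    ∑ᶠ w ∈ {w : s | ↑w ∈ T}, x w = ∑ᶠ v ∈ T, extend Subtype.val x 0 v := by
  have hzero : ∀ v ∈ T \ s, extend Subtype.val x 0 v = 0 := fun v hv =>
    extend_val_of_notMem x hv.2
  rw [← finsum_mem_inter_add_sdiff s T.toFinite, finsum_mem_eq_zero_of_forall_eq_zero hzero,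
    add_zero, Set.inter_comm, ← Subtype.image_preimage_coe,
    finsum_mem_image Subtype.val_injective.injOn]
  simp [Set.preimage]

lemma qForm_induce [Finite V] (H : SimpleGraph V) (x : s → ZMod 2) :
    qForm (H.induce s) x = qForm H (extend Subtype.val x 0) := by
  set f : Sym2 V → ZMod 2 :=
    Sym2.lift ⟨fun u v => extend Subtype.val x 0 u * extend Subtype.val x 0 v,
      fun _ _ => mul_comm _ _⟩
  have hsub : Sym2.map Subtype.val '' (H.induce s).edgeSet ⊆ H.edgeSet := by
    rintro _ ⟨e, he, rfl⟩
    induction e using Sym2.ind with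
    | _ u v => exact he
  have hzero : ∀ e ∈ H.edgeSet \ Sym2.map Subtype.val '' (H.induce s).edgeSet, f e = 0 := by
    rintro e ⟨he, hne⟩
    induction e using Sym2.ind with
    | _ u v =>
      by_cases hu : u ∈ s
      · by_cases hv : v ∈ s
        · exact absurd ⟨s(⟨u, hu⟩, ⟨v, hv⟩), he, rfl⟩ hne
        · simp [f, extend_val_of_notMem x hv]
      · simp [f, extend_val_of_notMem x hu]
  rw [qForm, qForm, ← finsum_mem_inter_add_sdiff (Sym2.map Subtype.val '' (H.induce s).edgeSet)
      H.edgeSet.toFinite, finsum_mem_eq_zero_of_forall_eq_zero hzero, add_zero,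
    Set.inter_eq_self_of_subset_right hsub,
    finsum_mem_image (Sym2.map.injective Subtype.val_injective).injOn]
  refine finsum_mem_congr rfl fun e _ => ?_
  induction e using Sym2.ind with
  | _ u v => simp

end Extend

section Graph
variable {V : Type*} (G : SimpleGraph V) [DecidableRel G.Adj]

lemma indicator_neighborSet {R : Type*} [Zero R] [One R] (v : V) :
    (G.neighborSet v).indicator 1 = G.adjMatrix R v := by
  funext u
  by_cases h : G.Adj v u <;> simp [h]

lemma indicator_oddNbhd [Fintype V] (S : Set V) :
    (oddNbhd G S).indicator 1 = G.adjMatrix (ZMod 2) *ᵥ S.indicator 1 := by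
  classical
  funext v
  have hcard : (G.neighborSet v ∩ S).ncard =
      (Finset.univ.filter (fun u => u ∈ S ∧ G.Adj v u)).card := by
    rw [← Set.ncard_coe_finset]; congr; ext; simp [and_comm]
  have hsum : (G.adjMatrix (ZMod 2) *ᵥ S.indicator 1) v =
      (Finset.univ.filter (fun u => u ∈ S ∧ G.Adj v u)).card := by
    simp [mulVec, dotProduct, Set.indicator_apply, Finset.sum_boole, ← ite_and]
  rw [hsum, Set.indicator_apply, oddNbhd, Set.mem_ofPred_eq, hcard]
  split_ifs with h
  · exact ((ZMod.natCast_eq_one_iff_odd).2 h).symm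
  · exact ((ZMod.natCast_eq_zero_iff_even).2 (Nat.not_odd_iff_even.1 h)).symm

end Graph

lemma indicator_diff_singleton_one {V R : Type*} [DecidableEq V] [AddGroupWithOne R]
    {T : Set V} {v : V} (hv : v ∈ T) :
    (T \ {v}).indicator 1 = T.indicator (1 : V → R) - Pi.single v 1 := by
  classical
  funext u
  by_cases hu : u = v
  · subst hu; simp [hv]
  · simp [Set.indicator_apply, hu]

section Bipartite
variable {n : ℕ} (P : Matrix (Fin n) (Fin n) (ZMod 2))

lemma ite_eq_one_zmod_two (u : ZMod 2) : (if u = 1 then 1 else 0 : ZMod 2) = u := by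
  revert u; decide

open scoped Classical in
lemma adjMatrix_bipGraph : (bipGraph n P).adjMatrix (ZMod 2) = fromBlocks 0 P Pᵀ 0 := by
  ext (a | b) (a | b) <;> rw [SimpleGraph.adjMatrix_apply] <;> simp [bipGraph, ite_eq_one_zmod_two]

open scoped Classical in
lemma adjMatrix_bipGraph_mul_self (hP : P * Pᵀ = 1) :
    (bipGraph n P).adjMatrix (ZMod 2) * (bipGraph n P).adjMatrix (ZMod 2) = 1 := by
  rw [adjMatrix_bipGraph, fromBlocks_multiply, mul_eq_one_comm.1 hP, hP, ← fromBlocks_one]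
  simp

lemma qForm_bipGraph (y : Fin n ⊕ Fin n → ZMod 2) :
    qForm (bipGraph n P) y = (y ∘ Sum.inl) ⬝ᵥ P *ᵥ (y ∘ Sum.inr) := by
  classical
  set edge : Fin n × Fin n → Sym2 (Fin n ⊕ Fin n) := fun p => s(Sum.inl p.1, Sum.inr p.2)
  have hedge : (bipGraph n P).edgeSet = edge '' {p | P p.1 p.2 = 1} := by
    ext e
    induction e using Sym2.ind with
    | _ u v =>
      simp only [SimpleGraph.mem_edgeSet, Set.mem_image, edge, Sym2.eq_iff]
      simp only [bipGraph, Set.mem_ofPred_eq, Prod.exists]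
      constructor
      · rintro (⟨a, b, h, rfl, rfl⟩ | ⟨a, b, h, rfl, rfl⟩)
        exacts [⟨a, b, h, .inl ⟨rfl, rfl⟩⟩, ⟨a, b, h, .inr ⟨rfl, rfl⟩⟩]
      · rintro ⟨a, b, h, ⟨rfl, rfl⟩ | ⟨rfl, rfl⟩⟩
        exacts [.inl ⟨a, b, h, rfl, rfl⟩, .inr ⟨a, b, h, rfl, rfl⟩]
  have hinj : Function.Injective edge := by
    rintro ⟨a, b⟩ ⟨a', b'⟩ h
    simpa [edge, Sym2.eq_iff] using h
  rw [qForm, hedge, finsum_mem_image hinj.injOn, finsum_mem_eq_indicator_dotProduct, dotProduct,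
    Fintype.sum_prod_type]
  simp only [dotProduct, mulVec, Finset.mul_sum]
  refine Finset.sum_congr rfl fun a _ => Finset.sum_congr rfl fun b _ => ?_
  simp [Set.indicator_apply, ite_eq_one_zmod_two, edge]
  ring

open scoped Classical in
lemma qForm_bipGraph_add (y z : Fin n ⊕ Fin n → ZMod 2) :
    qForm (bipGraph n P) (y + z) =
      qForm (bipGraph n P) y + qForm (bipGraph n P) z +
        y ⬝ᵥ (bipGraph n P).adjMatrix (ZMod 2) *ᵥ z := by
  have hsplit : ∀ u w : Fin n → ZMod 2,
      y ⬝ᵥ Sum.elim u w = (y ∘ Sum.inl) ⬝ᵥ u + (y ∘ Sum.inr) ⬝ᵥ w := fun u w => by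
    simp [dotProduct, Fintype.sum_sum_type]
  have htranspose : (y ∘ Sum.inr) ⬝ᵥ Pᵀ *ᵥ (z ∘ Sum.inl) =
      (z ∘ Sum.inl) ⬝ᵥ P *ᵥ (y ∘ Sum.inr) := by
    rw [mulVec_transpose, dotProduct_comm, dotProduct_mulVec]
  rw [qForm_bipGraph, qForm_bipGraph, qForm_bipGraph, adjMatrix_bipGraph, fromBlocks_mulVec,
    hsplit, Matrix.zero_mulVec, Matrix.zero_mulVec, zero_add, add_zero, htranspose, Pi.add_comp,
    Pi.add_comp, mulVec_add, dotProduct_add, add_dotProduct, add_dotProduct]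
  ring

open scoped Classical in
lemma bipGraph_stabilizer_phase (hP : P * Pᵀ = 1) {i : Fin n} {D : Set (Fin n ⊕ Fin n)}
    (hD : D ⊆ Set.range Sum.inr) (hodd : Sum.inl i ∈ oddNbhd (bipGraph n P) D)
    (y : Fin n ⊕ Fin n → ZMod 2) :
    ∑ᶠ v ∈ D, y v
      + ∑ᶠ v ∈ (bipGraph n P).neighborSet (Sum.inl i),
          (y + (oddNbhd (bipGraph n P) D \ {Sum.inl i}).indicator 1 : Fin n ⊕ Fin n → ZMod 2) v
      + qForm (bipGraph n P) (y + (oddNbhd (bipGraph n P) D \ {Sum.inl i}).indicator 1)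
      = qForm (bipGraph n P) y := by
  set A := (bipGraph n P).adjMatrix (ZMod 2)
  set d : Fin n ⊕ Fin n → ZMod 2 := D.indicator 1
  set s : Fin n ⊕ Fin n → ZMod 2 := (oddNbhd (bipGraph n P) D \ {Sum.inl i}).indicator 1
  have hs : s = A *ᵥ d - Pi.single (Sum.inl i) 1 := by
    simp only [s, A, d]
    rw [indicator_diff_singleton_one hodd, indicator_oddNbhd]
  have hdL : d ∘ Sum.inl = 0 := by
    funext a
    exact Set.indicator_of_notMem (fun ha => by obtain ⟨b, hb⟩ := hD ha; cases hb) _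
  have hsR : s ∘ Sum.inr = 0 := by
    funext b
    simp [hs, A, adjMatrix_bipGraph, fromBlocks_mulVec, hdL]
  have hAs : A *ᵥ s = d - A (Sum.inl i) := by
    rw [hs, mulVec_sub, mulVec_mulVec, adjMatrix_bipGraph_mul_self P hP, one_mulVec,
      mulVec_single_one]
    exact congrArg (d - ·) (congrFun (bipGraph n P).transpose_adjMatrix (Sum.inl i))
  have hsi : A (Sum.inl i) ⬝ᵥ s = 0 := by
    calc A (Sum.inl i) ⬝ᵥ s = (A *ᵥ s) (Sum.inl i) := rfl
      _ = d (Sum.inl i) - A (Sum.inl i) (Sum.inl i) := congrFun hAs _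
      _ = 0 := by
        rw [show d (Sum.inl i) = 0 from congrFun hdL i]
        simp [A, SimpleGraph.adjMatrix_apply]
  have hqs : qForm (bipGraph n P) s = 0 := by
    rw [qForm_bipGraph, hsR, mulVec_zero, dotProduct_zero]
  rw [finsum_mem_eq_indicator_dotProduct, finsum_mem_eq_indicator_dotProduct,
    indicator_neighborSet, qForm_bipGraph_add, hqs, hAs, dotProduct_add, hsi, dotProduct_sub,
    dotProduct_comm y, dotProduct_comm y]
  have two_eq_zero : (2 : ZMod 2) = 0 := rfl
  linear_combination (d ⬝ᵥ y) * two_eq_zero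

end Bipartite

theorem stmt9_general (n : ℕ) (P : Matrix (Fin n) (Fin n) (ZMod 2))
    (hP : P * Pᵀ = 1) (i : Fin n) (D : Set (Fin n ⊕ Fin n))
    (hD : D ⊆ Set.range Sum.inr) (hodd : Sum.inl i ∈ oddNbhd (bipGraph n P) D) :
    ZOp {w : ({Sum.inl i}ᶜ : Set (Fin n ⊕ Fin n)) | ↑w ∈ D}
      (XOp {w : ({Sum.inl i}ᶜ : Set (Fin n ⊕ Fin n)) |
              ↑w ∈ oddNbhd (bipGraph n P) D \ {Sum.inl i}}
        (ZOp {w : ({Sum.inl i}ᶜ : Set (Fin n ⊕ Fin n)) |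
                (bipGraph n P).Adj (Sum.inl i) ↑w}
          (graphState (SimpleGraph.induce ({Sum.inl i}ᶜ : Set (Fin n ⊕ Fin n))
            (bipGraph n P))))) =
    graphState (SimpleGraph.induce ({Sum.inl i}ᶜ : Set (Fin n ⊕ Fin n)) (bipGraph n P)) := by
  funext x
  have hshift : extend Subtype.val
      (x + {w : ({Sum.inl i}ᶜ : Set (Fin n ⊕ Fin n)) |
        ↑w ∈ oddNbhd (bipGraph n P) D \ {Sum.inl i}}.indicator 1)
        (0 : Fin n ⊕ Fin n → ZMod 2) =
      extend Subtype.val x 0 + (oddNbhd (bipGraph n P) D \ {Sum.inl i}).indicator 1 := by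
    rw [extend_val_add, extend_val_indicator_one fun v hv => hv.2]
  simp only [ZOp, XOp, graphState, ← SimpleGraph.mem_neighborSet, neg_one_pow_finsum_mem_val_s9]
  simp only [finsum_mem_extend_val, qForm_induce, hshift]
  rw [← bipGraph_stabilizer_phase P hP hD hodd (extend Subtype.val x 0), neg_one_pow_val_add,
    neg_one_pow_val_add]
  ring

/-- for the bipartite graph `G` of `P` with `P Pᵀ = I`, `i ∈ L`, and `D ⊆ R`
with `i ∈ Odd(D)`, the operator `U_D′ Z_{N_i} = Z_D X_{Odd(D) \\ {i}} Z_{N_i}` stabilizes the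
graph state of the vertex-deleted graph `G \\ i` (here `Odd(D)` and `N_i` are computed
in `G`). -/
theorem stmt9 (n : ℕ) (hn : 1 ≤ n) (P : Matrix (Fin n) (Fin n) (ZMod 2))
    (hP : P * Pᵀ = 1) (i : Fin n) (D : Set (Fin n ⊕ Fin n))
    (hD : D ⊆ Set.range Sum.inr) (hodd : Sum.inl i ∈ oddNbhd (bipGraph n P) D) :
    ZOp {w : ({Sum.inl i}ᶜ : Set (Fin n ⊕ Fin n)) | ↑w ∈ D}
      (XOp {w : ({Sum.inl i}ᶜ : Set (Fin n ⊕ Fin n)) |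
              ↑w ∈ oddNbhd (bipGraph n P) D \ {Sum.inl i}}
        (ZOp {w : ({Sum.inl i}ᶜ : Set (Fin n ⊕ Fin n)) |
                (bipGraph n P).Adj (Sum.inl i) ↑w}
          (graphState (SimpleGraph.induce ({Sum.inl i}ᶜ : Set (Fin n ⊕ Fin n))
            (bipGraph n P))))) =
    graphState (SimpleGraph.induce ({Sum.inl i}ᶜ : Set (Fin n ⊕ Fin n)) (bipGraph n P)) :=
  stmt9_general n P hP i D hD hodd
end

section
/- Let G be a finite simple graph on vertex set W, let i ∈ W, and let a, b ∈ ℂ. Apply, to the state (a|0⟩_i + b|1⟩_i) ⊗ |G \ i⟩ on the qubits indexed by W, first the controlled-Z gates between qubit i and each qubit in N_i, and then the Hadamard gate on qubit i. The resulting state is (1/√2)[ |0⟩_i ⊗ ( a|G \ i⟩ + b Z_{N_i}|G \ i⟩ ) + |1⟩_i ⊗ ( a|G \ i⟩ − b Z_{N_i}|G \ i⟩ ) ]. (This is the encryption step of the QQ protocol: measuring qubit i in the computational basis then yields the encoded secret a|G\i⟩ + b Z_{N_i}|G\i⟩ up to a known correction.) -/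
open Matrix

/-- Controlled-Z gates applied between qubit `i` and every qubit of the set `S`:
`(∏_{w ∈ S} CZ_{i,w} ψ)(x) = (-1)^{x_i · ∑_{w ∈ S} x_w} ψ(x)`. -/
noncomputable def CZset {W : Type*} (i : W) (S : Set W) (ψ : (W → ZMod 2) → ℂ) :
    (W → ZMod 2) → ℂ :=
  fun x => (-1 : ℂ) ^ ((x i).val * ∑ᶠ w ∈ S, (x w).val) * ψ x

/-- The Hadamard gate on qubit `i`:
`(H_i ψ)(x) = (1/√2) ∑_{y ∈ ZMod 2} (-1)^{x_i y} ψ(x with i-th coordinate y)`. -/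
noncomputable def HOp {W : Type*} [DecidableEq W] (i : W) (ψ : (W → ZMod 2) → ℂ) :
    (W → ZMod 2) → ℂ :=
  fun x => (Real.sqrt 2 : ℂ)⁻¹ *
    ∑ y : ZMod 2, (-1 : ℂ) ^ ((x i).val * y.val) * ψ (Function.update x i y)

/-- applying to the product state `(a|0⟩_i + b|1⟩_i) ⊗ |G \\ i⟩` the
controlled-Z gates between qubit `i` and each qubit of `N_i`, followed by the Hadamard
gate on qubit `i`, produces the state
`(1/√2)[ |0⟩_i ⊗ (a|G \\ i⟩ + b Z_{N_i}|G \\ i⟩) + |1⟩_i ⊗ (a|G \\ i⟩ − b Z_{N_i}|G \\ i⟩) ]`. -/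
theorem stmt11 {W : Type*} [Fintype W] [DecidableEq W] (G : SimpleGraph W) (i : W)
    (a b : ℂ) :
    HOp i (CZset i (G.neighborSet i)
      (fun x => (if x i = 0 then a else b) *
        graphState (SimpleGraph.induce ({i}ᶜ : Set W) G) (fun w => x ↑w))) =
    fun x => (Real.sqrt 2 : ℂ)⁻¹ *
      (if x i = 0 then
        a * graphState (SimpleGraph.induce ({i}ᶜ : Set W) G) (fun w => x ↑w) +
          b * ZOp {w : ({i}ᶜ : Set W) | G.Adj i ↑w}
            (graphState (SimpleGraph.induce ({i}ᶜ : Set W) G)) (fun w => x ↑w)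
      else
        a * graphState (SimpleGraph.induce ({i}ᶜ : Set W) G) (fun w => x ↑w) -
          b * ZOp {w : ({i}ᶜ : Set W) | G.Adj i ↑w}
            (graphState (SimpleGraph.induce ({i}ᶜ : Set W) G)) (fun w => x ↑w)) := by
  funext x
  have hupd : ∀ y : ZMod 2, (fun w : ({i}ᶜ : Set W) => Function.update x i y ↑w)
      = fun w : ({i}ᶜ : Set W) => x ↑w := by
    intro y; funext w
    exact Function.update_of_ne w.2 _ _
  have himg : Subtype.val '' {w : ({i}ᶜ : Set W) | G.Adj i ↑w} = G.neighborSet i := by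
    ext w
    simp only [Set.mem_image, Set.mem_setOf_eq, SimpleGraph.mem_neighborSet]
    constructor
    · rintro ⟨v, hv, rfl⟩; exact hv
    · intro h; exact ⟨⟨w, fun hw => G.ne_of_adj h hw.symm⟩, h, rfl⟩
  have hsum : ∀ y : ZMod 2,
      (∑ᶠ w ∈ G.neighborSet i, ((Function.update x i y) w).val)
      = ∑ᶠ w ∈ {w : ({i}ᶜ : Set W) | G.Adj i ↑w}, (x ↑w).val := by
    intro y
    rw [← himg, finsum_mem_image Subtype.val_injective.injOn]
    refine finsum_mem_congr rfl fun w hw => ?_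
    rw [Function.update_of_ne w.2]
  simp only [HOp, CZset, ZOp, hupd]
  rw [show (Finset.univ : Finset (ZMod 2)) = {0, 1} by decide,
    Finset.sum_insert (by decide), Finset.sum_singleton]
  rw [hsum 0, hsum 1]
  simp only [Function.update_self]
  have h0 : ((0 : ZMod 2)).val = 0 := rfl
  have h1 : ((1 : ZMod 2)).val = 1 := rfl
  rw [h0, h1]
  simp only [if_true, one_ne_zero, if_false, mul_zero, mul_one, pow_zero, zero_mul, one_mul]
  by_cases hx : x i = 0
  · rw [if_pos hx, hx, h0, pow_zero, one_mul]
    ring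
  · rw [if_neg hx]
    have h2 : x i = 1 := by
      have : ∀ c : ZMod 2, c ≠ 0 → c = 1 := by decide
      exact this _ hx
    rw [h2, h1, pow_one]
    ring
end
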